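/- arXiv:1204.4081 — 2 statements merged into one kernel-verified Lean document; each statement's English description precedes it below -/
import Mathlib

section
/- For x < -1, the difference arctan(x) - (-π/2 - 1/x) is bounded in absolute value by 1/(3|x|³). -/
/-! Writing `y = 1 / x`, the relation `arctan x = -(π / 2) - arctan y` for `x < 0` turns the
error into `y - arctan y`. Both `t ↦ t - arctan t` and `t ↦ t ^ 3 / 3 - (t - arctan t)` vanish
at `0` and have the nonnegative derivatives `t ^ 2 / (1 + t ^ 2)` and `t ^ 4 / (1 + t ^ 2)`, so
`y - arctan y` lies between `0` and `y ^ 3 / 3`. -/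

open Real

lemma hasDerivAt_sub_arctan (t : ℝ) :
    HasDerivAt (fun t => t - arctan t) (t ^ 2 / (1 + t ^ 2)) t :=
  ((hasDerivAt_id' t).sub (hasDerivAt_arctan t)).congr_deriv (by field_simp; ring)

lemma hasDerivAt_cube_div_three_sub_sub_arctan (t : ℝ) :
    HasDerivAt (fun t => t ^ 3 / 3 - (t - arctan t)) (t ^ 4 / (1 + t ^ 2)) t :=
  (((hasDerivAt_pow 3 t).div_const 3).sub (hasDerivAt_sub_arctan t)).congr_deriv
    (by field_simp; ring)

lemma monotone_sub_arctan : Monotone fun t : ℝ => t - arctan t :=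
  monotone_of_hasDerivAt_nonneg hasDerivAt_sub_arctan fun t => by positivity

lemma monotone_cube_div_three_sub_sub_arctan :
    Monotone fun t : ℝ => t ^ 3 / 3 - (t - arctan t) :=
  monotone_of_hasDerivAt_nonneg hasDerivAt_cube_div_three_sub_sub_arctan fun t => by positivity

lemma abs_sub_arctan_le (y : ℝ) : |y - arctan y| ≤ |y| ^ 3 / 3 := by
  rcases le_total 0 y with hy | hy
  · have hlow : 0 ≤ y - arctan y := by simpa using monotone_sub_arctan hy
    have hupp : 0 ≤ y ^ 3 / 3 - (y - arctan y) := by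
      simpa using monotone_cube_div_three_sub_sub_arctan hy
    rw [abs_of_nonneg hlow, abs_of_nonneg hy]
    linarith
  · have hupp : y - arctan y ≤ 0 := by simpa using monotone_sub_arctan hy
    have hlow : y ^ 3 / 3 - (y - arctan y) ≤ 0 := by
      simpa using monotone_cube_div_three_sub_sub_arctan hy
    rw [abs_of_nonpos hupp, abs_of_nonpos hy, Odd.neg_pow (by decide)]
    linarith

theorem arctan_expansion_neg (x : ℝ) (hx : x < -1) :
    |arctan x - (-(π / 2) - 1 / x)| ≤ 1 / (3 * |x| ^ 3) := by
  have herr : arctan x - (-(π / 2) - 1 / x) = x⁻¹ - arctan x⁻¹ := by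
    rw [arctan_inv_of_neg (by linarith)]
    ring
  calc |arctan x - (-(π / 2) - 1 / x)| = |x⁻¹ - arctan x⁻¹| := by rw [herr]
    _ ≤ |x⁻¹| ^ 3 / 3 := abs_sub_arctan_le x⁻¹
    _ = 1 / (3 * |x| ^ 3) := by rw [abs_inv]; field_simp
end

section
/- Let k_i = (2π/L)n̄_i - (ε/L)·s_i + (1/L)·r_i where s_i = ∑_{j≠i} 1/(n̄_i - n̄_j), the n̄_i are distinct integers, and |r_i| ≤ Cε². Then ∑_i k_i²/2 = (2π²/L²)∑_i n̄_i² - (πε/L²)·N(N-1) + O(ε²) with an explicit constant; here we use ∑_i n̄_i·s_i = N(N-1)/2 and ε = cL/π. -/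
/-!
Write `L kᵢ = 2π n̄ᵢ - ε sᵢ + rᵢ` and expand the square. The cross terms `-2πε n̄ᵢ sᵢ` sum to
`-πε N(N-1)`, because pairing `i` with `j` gives `n̄ᵢ/(n̄ᵢ - n̄ⱼ) + n̄ⱼ/(n̄ⱼ - n̄ᵢ) = 1`. The rest,
`(rᵢ - ε sᵢ)² + 4π n̄ᵢ rᵢ`, is `O(ε²)` because `|rᵢ| ≤ Cε²` and `ε ≤ 1`.
-/

open Real Finset

theorem two_mul_sum_sum_sdiff_singleton_of_add_swap {ι R : Type*} [Fintype ι] [DecidableEq ι]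
    [Ring R] (f : ι → ι → R) (hf : ∀ i j, i ≠ j → f i j + f j i = 1) :
    2 * ∑ i, ∑ j ∈ univ \ {i}, f i j = Fintype.card ι * (Fintype.card ι - 1) := by
  have hswap : ∑ i, ∑ j ∈ univ \ {i}, f i j = ∑ i, ∑ j ∈ univ \ {i}, f j i :=
    sum_comm' (by simp [ne_comm])
  calc 2 * ∑ i, ∑ j ∈ univ \ {i}, f i j
      = ∑ i, ∑ j ∈ univ \ {i}, (f i j + f j i) := by
        rw [two_mul]; nth_rw 2 [hswap]; simp only [← sum_add_distrib]
    _ = ∑ i : ι, ((Fintype.card ι : R) - 1) := by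
        refine sum_congr rfl fun i _ => ?_
        rw [sum_congr rfl fun j hj => hf i j (by simpa [eq_comm] using hj)]
        simp [sum_sdiff_eq_sub (subset_univ _)]
    _ = Fintype.card ι * (Fintype.card ι - 1) := by simp [mul_sub]

theorem two_mul_sum_mul_sum_inv_sub {ι K : Type*} [Fintype ι] [DecidableEq ι] [Field K]
    {x : ι → K} (hx : Function.Injective x) :
    2 * ∑ i, x i * ∑ j ∈ univ \ {i}, 1 / (x i - x j) = Fintype.card ι * (Fintype.card ι - 1) := by
  refine (congrArg (2 * ·) (sum_congr rfl fun i _ => mul_sum _ _ _)).trans ?_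
  refine two_mul_sum_sum_sdiff_singleton_of_add_swap (fun i j => x i * (1 / (x i - x j)))
    fun i j hij => ?_
  have hij' : x i - x j ≠ 0 := sub_ne_zero.2 (hx.ne hij)
  have hji' : x j - x i ≠ 0 := sub_ne_zero.2 (hx.ne hij.symm)
  field_simp
  ring

theorem abs_sub_mul_sq_add_mul_le {C ε r s a : ℝ} (hε : 0 < ε) (hε1 : ε ≤ 1)
    (hr : |r| ≤ C * ε ^ 2) :
    |(r - ε * s) ^ 2 + a * r| ≤ ((|C| + |s|) ^ 2 + |a| * |C|) * ε ^ 2 := by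
  have hr' : |r| ≤ |C| * ε ^ 2 := hr.trans (by gcongr; exact le_abs_self C)
  have hε2 : ε ^ 2 ≤ ε := by nlinarith
  have hdev : |r - ε * s| ≤ (|C| + |s|) * ε := calc
    |r - ε * s| ≤ |r| + ε * |s| := by simpa [abs_mul, abs_of_pos hε] using abs_sub r (ε * s)
    _ ≤ |C| * ε + ε * |s| := by
        nlinarith [mul_le_mul_of_nonneg_left hε2 (abs_nonneg C)]
    _ = (|C| + |s|) * ε := by ring
  calc |(r - ε * s) ^ 2 + a * r| ≤ |r - ε * s| ^ 2 + |a| * |r| :=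
        (abs_add_le _ _).trans_eq (by rw [abs_mul, abs_sq, sq_abs])
    _ ≤ ((|C| + |s|) * ε) ^ 2 + |a| * (|C| * ε ^ 2) := by gcongr
    _ = ((|C| + |s|) ^ 2 + |a| * |C|) * ε ^ 2 := by ring

theorem energy_approximation_general (N : ℕ) (L : ℝ)
    (nbar : Fin N → ℤ) (hinj : Function.Injective nbar) (C : ℝ) :
    ∃ D : ℝ, ∀ ε : ℝ, 0 < ε → ε ≤ 1 → ∀ k r : Fin N → ℝ,
      (∀ i, |r i| ≤ C * ε ^ 2) →
      (∀ i, k i = (2 * π / L) * (nbar i : ℝ)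
        - (ε / L) * (∑ j ∈ univ \ {i}, 1 / ((nbar i : ℝ) - (nbar j : ℝ)))
        + (1 / L) * r i) →
      |∑ i, (k i) ^ 2 / 2
        - ((2 * π ^ 2 / L ^ 2) * ∑ i, (nbar i : ℝ) ^ 2
          - (π * ε / L ^ 2) * N * (N - 1))| ≤ D * ε ^ 2 := by
  set s : Fin N → ℝ := fun i => ∑ j ∈ univ \ {i}, 1 / ((nbar i : ℝ) - nbar j)
  refine ⟨∑ i, ((|C| + |s i|) ^ 2 + |4 * π * nbar i| * |C|) / (2 * L ^ 2),
    fun ε hε hε1 k r hr hk => ?_⟩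
  have hk' (i : Fin N) : k i = (2 * π / L) * nbar i - (ε / L) * s i + (1 / L) * r i := hk i
  have hns : (π * ε / L ^ 2) * N * (N - 1) = ∑ i, (2 * π * ε / L ^ 2) * (nbar i * s i) := by
    have hcount : 2 * ∑ i, (nbar i : ℝ) * s i = N * (N - 1) := by
      have := two_mul_sum_mul_sum_inv_sub (x := fun i => (nbar i : ℝ))
        (Int.cast_injective.comp hinj)
      rwa [Fintype.card_fin] at this
    rw [← mul_sum, mul_assoc, ← hcount]
    ring
  have hexpand : ∑ i, (k i) ^ 2 / 2
        - ((2 * π ^ 2 / L ^ 2) * ∑ i, (nbar i : ℝ) ^ 2 - (π * ε / L ^ 2) * N * (N - 1))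
      = ∑ i, ((r i - ε * s i) ^ 2 + 4 * π * nbar i * r i) / (2 * L ^ 2) := by
    rw [hns, mul_sum, ← sum_sub_distrib, ← sum_sub_distrib]
    exact sum_congr rfl fun i _ => by rw [hk' i]; ring
  rw [hexpand, sum_mul]
  refine (abs_sum_le_sum_abs _ _).trans (sum_le_sum fun i _ => ?_)
  rw [abs_div, abs_of_nonneg (by positivity : (0 : ℝ) ≤ 2 * L ^ 2), div_mul_eq_mul_div]
  exact div_le_div_of_nonneg_right (abs_sub_mul_sq_add_mul_le hε hε1 (hr i)) (by positivity)

theorem energy_approximation (N : ℕ) (L : ℝ) (hL : 0 < L)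
    (nbar : Fin N → ℤ) (hinj : Function.Injective nbar) (C : ℝ) :
    ∃ D : ℝ, ∀ ε : ℝ, 0 < ε → ε ≤ 1 → ∀ k r : Fin N → ℝ,
      (∀ i, |r i| ≤ C * ε ^ 2) →
      (∀ i, k i = (2 * π / L) * (nbar i : ℝ)
        - (ε / L) * (∑ j ∈ univ \ {i}, 1 / ((nbar i : ℝ) - (nbar j : ℝ)))
        + (1 / L) * r i) →
      |∑ i, (k i) ^ 2 / 2
        - ((2 * π ^ 2 / L ^ 2) * ∑ i, (nbar i : ℝ) ^ 2
          - (π * ε / L ^ 2) * N * (N - 1))| ≤ D * ε ^ 2 :=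
  energy_approximation_general N L nbar hinj C
end
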